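/- Let λ ≥ 1 and let X_1,…,X_T be symmetric positive semi-definite d×d real matrices with tr(X_t) ≤ 1 for all t. Define S_1 = λI and S_{t+1} = S_t + X_t. Then ∑_{t=1}^T tr(S_t^{-1/2} X_t S_t^{-1/2}) ≤ 2d·log(1 + T/(dλ)). -/

import Mathlib

open Matrix


lemma log_aux {x : ℝ} (h0 : 0 ≤ x) (h1 : x ≤ 1) : x ≤ 2 * Real.log (1 + x) := by
  have hx : (0:ℝ) < 1 + x := by linarith
  have key : Real.exp (x/2) ≤ 1 + x := by
    have h2 : 1 - x/2 ≤ Real.exp (-(x/2)) := by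
      have := Real.add_one_le_exp (-(x/2)); linarith
    have h3 : Real.exp (x/2) * (1 - x/2) ≤ 1 := by
      calc Real.exp (x/2) * (1 - x/2) ≤ Real.exp (x/2) * Real.exp (-(x/2)) := by
            exact mul_le_mul_of_nonneg_left h2 (Real.exp_pos _).le
        _ = 1 := by rw [← Real.exp_add]; simp
    nlinarith [Real.exp_pos (x/2)]
  have : x/2 ≤ Real.log (1 + x) := (Real.le_log_iff_exp_le hx).mpr key
  linarith

section helpers
variable {d : ℕ}

lemma spectral_real {A : Matrix (Fin d) (Fin d) ℝ} (hH : A.IsHermitian) :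
    A = (hH.eigenvectorUnitary : Matrix (Fin d) (Fin d) ℝ) * diagonal hH.eigenvalues
        * star (hH.eigenvectorUnitary : Matrix (Fin d) (Fin d) ℝ) := by
  simpa using hH.spectral_theorem

lemma trace_eq_sum_eigs {A : Matrix (Fin d) (Fin d) ℝ} (hH : A.IsHermitian) :
    A.trace = ∑ i, hH.eigenvalues i := by
  conv_lhs => rw [spectral_real hH]
  rw [trace_mul_cycle, Unitary.coe_star_mul_self, one_mul, trace_diagonal]

lemma one_sub_psd {A : Matrix (Fin d) (Fin d) ℝ} (hA : A.PosSemidef) (htr : A.trace ≤ 1) :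
    ((1 : Matrix (Fin d) (Fin d) ℝ) - A).PosSemidef := by
  have hH := hA.1
  set U : Matrix (Fin d) (Fin d) ℝ := (hH.eigenvectorUnitary : Matrix (Fin d) (Fin d) ℝ) with hU
  have hUU : U * star U = 1 := mem_unitaryGroup_iff.mp hH.eigenvectorUnitary.2
  have hle : ∀ i, hH.eigenvalues i ≤ 1 := by
    intro i
    have h1 : hH.eigenvalues i ≤ ∑ j, hH.eigenvalues j :=
      Finset.single_le_sum (fun j _ => hA.eigenvalues_nonneg j) (Finset.mem_univ i)
    rw [← trace_eq_sum_eigs hH] at h1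
    linarith
  have hdiag : (diagonal (fun i => 1 - hH.eigenvalues i) : Matrix (Fin d) (Fin d) ℝ).PosSemidef :=
    posSemidef_diagonal_iff.mpr fun i => by linarith [hle i]
  have key : U * diagonal (fun i => 1 - hH.eigenvalues i) * Uᴴ = 1 - A := by
    have hd : (diagonal (fun i => 1 - hH.eigenvalues i) : Matrix (Fin d) (Fin d) ℝ)
        = 1 - diagonal hH.eigenvalues := by
      rw [← diagonal_one, diagonal_sub]
    rw [hd, Matrix.mul_sub, Matrix.sub_mul, mul_one, ← Matrix.star_eq_conjTranspose, hUU]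
    conv_rhs => rw [spectral_real hH]
  rw [← key]
  exact hdiag.mul_mul_conjTranspose_same U

lemma trace_le_two_log_det {M : Matrix (Fin d) (Fin d) ℝ} (hM : M.PosSemidef)
    (h1 : ((1 : Matrix (Fin d) (Fin d) ℝ) - M).PosSemidef) :
    M.trace ≤ 2 * Real.log ((1 + M).det) := by
  have hH := hM.1
  set U : Matrix (Fin d) (Fin d) ℝ := (hH.eigenvectorUnitary : Matrix (Fin d) (Fin d) ℝ) with hU
  have hUU : U * star U = 1 := mem_unitaryGroup_iff.mp hH.eigenvectorUnitary.2
  have hUU' : star U * U = 1 := Unitary.coe_star_mul_self _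
  have hle : ∀ i, hH.eigenvalues i ≤ 1 := by
    intro i
    have h2 := h1.conjTranspose_mul_mul_same U
    have key : Uᴴ * ((1 : Matrix (Fin d) (Fin d) ℝ) - M) * U
        = diagonal (fun i => 1 - hH.eigenvalues i) := by
      rw [Matrix.mul_sub, Matrix.sub_mul, Matrix.mul_one, ← Matrix.star_eq_conjTranspose, hUU']
      conv_lhs => rw [spectral_real hH]
      have h4 : star U * (U * diagonal hH.eigenvalues * star U) * U
          = (star U * U) * diagonal hH.eigenvalues * (star U * U) := by
        simp only [mul_assoc]
      rw [h4, hUU', one_mul, mul_one]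
      rw [← diagonal_one, diagonal_sub]
    rw [key] at h2
    have := posSemidef_diagonal_iff.mp h2 i
    linarith
  have hnn := hM.eigenvalues_nonneg
  have hdet : (1 + M).det = ∏ i, (1 + hH.eigenvalues i) := by
    have h3 : (1 : Matrix (Fin d) (Fin d) ℝ) + M
        = U * diagonal (fun i => 1 + hH.eigenvalues i) * star U := by
      have hd : (diagonal (fun i => 1 + hH.eigenvalues i) : Matrix (Fin d) (Fin d) ℝ)
          = 1 + diagonal hH.eigenvalues := by
        rw [← diagonal_one, diagonal_add]
      rw [hd, Matrix.mul_add, Matrix.add_mul, mul_one, hUU]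
      conv_lhs => rw [spectral_real hH]
    rw [h3, det_mul_right_comm, hUU, one_mul, det_diagonal]
  rw [hdet, trace_eq_sum_eigs hH]
  have hlog : Real.log (∏ i, (1 + hH.eigenvalues i)) = ∑ i, Real.log (1 + hH.eigenvalues i) :=
    Real.log_prod (fun i _ => by have := hnn i; positivity)
  rw [hlog, Finset.mul_sum]
  exact Finset.sum_le_sum fun i _ => log_aux (hnn i) (hle i)

lemma det_le_trace_div_pow (hd : 0 < d) {A : Matrix (Fin d) (Fin d) ℝ} (hA : A.PosSemidef) :
    A.det ≤ (A.trace / d) ^ d := by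
  have hH := hA.1
  have hnn := hA.eigenvalues_nonneg
  have hdet : A.det = ∏ i, hH.eigenvalues i := by simpa using hH.det_eq_prod_eigenvalues
  have hdne : (d : ℝ) ≠ 0 := Nat.cast_ne_zero.mpr hd.ne'
  have amgm : ∏ i, hH.eigenvalues i ^ ((1:ℝ)/d) ≤ ∑ i, (1/d) * hH.eigenvalues i := by
    apply Real.geom_mean_le_arith_mean_weighted
    · intro i _; positivity
    · simp [Finset.sum_const]; field_simp
    · intro i _; exact hnn i
  have hrw : ∏ i, hH.eigenvalues i = (∏ i, hH.eigenvalues i ^ ((1:ℝ)/d)) ^ d := by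
    rw [← Finset.prod_pow]
    refine Finset.prod_congr rfl fun i _ => ?_
    rw [← Real.rpow_natCast (hH.eigenvalues i ^ ((1:ℝ)/d)) d, ← Real.rpow_mul (hnn i)]
    rw [one_div_mul_cancel hdne, Real.rpow_one]
  rw [hdet, hrw, trace_eq_sum_eigs hH]
  have h2 : ∑ i, (1/(d:ℝ)) * hH.eigenvalues i = (∑ i, hH.eigenvalues i) / d := by
    rw [← Finset.mul_sum]; ring
  apply pow_le_pow_left₀ (Finset.prod_nonneg fun i _ => Real.rpow_nonneg (hnn i) _)
  rw [← h2]; exact amgm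

end helpers

/-- Elliptical-potential style bound: with `S 0 = λ • I` and `S (t+1) = S t + X t`,
where each `X t` is PSD with trace at most 1, and `R t` is the positive definite
square root of `S t`, we have
`∑_{t<T} tr((S t)^{-1/2} X t (S t)^{-1/2}) ≤ 2 d log(1 + T/(dλ))`. -/
theorem sum_trace_conj_le {d T : ℕ} (lam : ℝ) (hlam : 1 ≤ lam)
    (X : ℕ → Matrix (Fin d) (Fin d) ℝ)
    (hX : ∀ t, (X t).PosSemidef) (hXtr : ∀ t, (X t).trace ≤ 1)
    (S : ℕ → Matrix (Fin d) (Fin d) ℝ)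
    (hS0 : S 0 = lam • (1 : Matrix (Fin d) (Fin d) ℝ))
    (hSsucc : ∀ t, S (t + 1) = S t + X t)
    (R : ℕ → Matrix (Fin d) (Fin d) ℝ)
    (hR : ∀ t, (R t).PosDef) (hRR : ∀ t, R t * R t = S t) :
    ∑ t ∈ Finset.range T, ((R t)⁻¹ * X t * (R t)⁻¹).trace
      ≤ 2 * d * Real.log (1 + T / (d * lam)) := by
  rcases Nat.eq_zero_or_pos d with hd | hd
  · subst hd
    simp [Matrix.trace]
  have hlam0 : (0:ℝ) < lam := by linarith
  have hd0 : (0:ℝ) < (d:ℝ) := by exact_mod_cast hd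
  -- positive definiteness of S
  have hSpd : ∀ t, (S t).PosDef := by
    intro t
    induction t with
    | zero =>
      rw [hS0, smul_one_eq_diagonal]
      exact posDef_diagonal_iff.mpr fun i => hlam0
    | succ n ih =>
      rw [hSsucc]
      exact ih.add_posSemidef (hX n)
  have hSub : ∀ t, (S t - lam • 1).PosSemidef := by
    intro t
    induction t with
    | zero => rw [hS0, sub_self]; exact Matrix.PosSemidef.zero
    | succ n ih =>
      have : S (n+1) - lam • 1 = (S n - lam • 1) + X n := by rw [hSsucc]; abel
      rw [this]
      exact ih.add (hX n)
  -- S t - X t is PSD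
  have hSX : ∀ t, (S t - X t).PosSemidef := by
    intro t
    have h1 : ((lam - 1) • (1 : Matrix (Fin d) (Fin d) ℝ)).PosSemidef := by
      rw [smul_one_eq_diagonal]
      exact posSemidef_diagonal_iff.mpr fun i => by linarith
    have h2 : S t - X t = (S t - lam • 1) + ((lam - 1) • 1 + (1 - X t)) := by
      have e : ((lam - 1) • (1 : Matrix (Fin d) (Fin d) ℝ)) = lam • 1 - 1 := by
        rw [sub_smul, one_smul]
      rw [e]; abel
    rw [h2]
    exact (hSub t).add (h1.add (one_sub_psd (hX t) (hXtr t)))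
  -- invertibility facts
  have hu : ∀ t, IsUnit (R t).det := fun t => (hR t).det_pos.ne'.isUnit
  have hinvH : ∀ t, ((R t)⁻¹)ᴴ = (R t)⁻¹ := fun t => (hR t).1.inv
  have e1 : ∀ t, (R t)⁻¹ * S t * (R t)⁻¹ = 1 := by
    intro t
    rw [← hRR t, ← mul_assoc, Matrix.nonsing_inv_mul _ (hu t), one_mul,
      Matrix.mul_nonsing_inv _ (hu t)]
  -- per-step bound
  have step : ∀ t, ((R t)⁻¹ * X t * (R t)⁻¹).trace
      ≤ 2 * (Real.log (S (t+1)).det - Real.log (S t).det) := by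
    intro t
    have hM : ((R t)⁻¹ * X t * (R t)⁻¹).PosSemidef := by
      have := (hX t).mul_mul_conjTranspose_same (R t)⁻¹
      rwa [hinvH t] at this
    have h1M : ((1 : Matrix (Fin d) (Fin d) ℝ) - (R t)⁻¹ * X t * (R t)⁻¹).PosSemidef := by
      have key : (1 : Matrix (Fin d) (Fin d) ℝ) - (R t)⁻¹ * X t * (R t)⁻¹
          = (R t)⁻¹ * (S t - X t) * (R t)⁻¹ := by
        rw [Matrix.mul_sub, Matrix.sub_mul, e1 t]
      rw [key]
      have := (hSX t).mul_mul_conjTranspose_same (R t)⁻¹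
      rwa [hinvH t] at this
    have hbound := trace_le_two_log_det hM h1M
    have hdet1 : ((1 : Matrix (Fin d) (Fin d) ℝ) + (R t)⁻¹ * X t * (R t)⁻¹).det
        = (S (t+1)).det / (S t).det := by
      have e2 : (1 : Matrix (Fin d) (Fin d) ℝ) + (R t)⁻¹ * X t * (R t)⁻¹
          = (R t)⁻¹ * S (t+1) * (R t)⁻¹ := by
        rw [hSsucc, Matrix.mul_add, Matrix.add_mul, e1 t]
      have hdetS : (S t).det = (R t).det * (R t).det := by
        rw [← hRR t, det_mul]
      have hRd : (R t).det ≠ 0 := (hR t).det_pos.ne'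
      rw [e2, det_mul, det_mul, det_nonsing_inv, Ring.inverse_eq_inv', hdetS]
      field_simp
    rw [hdet1, Real.log_div (hSpd (t+1)).det_pos.ne' (hSpd t).det_pos.ne'] at hbound
    exact hbound
  -- telescoping
  have tele : ∑ t ∈ Finset.range T, ((R t)⁻¹ * X t * (R t)⁻¹).trace
      ≤ 2 * (Real.log (S T).det - Real.log (S 0).det) := by
    calc ∑ t ∈ Finset.range T, ((R t)⁻¹ * X t * (R t)⁻¹).trace
        ≤ ∑ t ∈ Finset.range T, 2 * (Real.log (S (t+1)).det - Real.log (S t).det) :=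
          Finset.sum_le_sum fun t _ => step t
      _ = 2 * ∑ t ∈ Finset.range T, (Real.log (S (t+1)).det - Real.log (S t).det) := by
          rw [Finset.mul_sum]
      _ = 2 * (Real.log (S T).det - Real.log (S 0).det) := by
          rw [Finset.sum_range_sub (fun t => Real.log (S t).det)]
  -- det S 0
  have hS0det : Real.log (S 0).det = d * Real.log lam := by
    rw [hS0, det_smul, det_one, mul_one, Fintype.card_fin, Real.log_pow]
  -- trace bounds
  have htrace_ub : ∀ t, (S t).trace ≤ d * lam + t := by
    intro t
    induction t with
    | zero => rw [hS0, trace_smul, trace_one, Fintype.card_fin]; simp [mul_comm]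
    | succ n ih =>
      rw [hSsucc, trace_add]
      push_cast
      have := hXtr n
      linarith
  have htrace_lb : d * lam ≤ (S T).trace := by
    have h1 : 0 ≤ (S T - lam • 1).trace := by
      have h2 := (hSub T).eigenvalues_nonneg
      rw [trace_eq_sum_eigs (hSub T).1]
      exact Finset.sum_nonneg fun i _ => h2 i
    rw [trace_sub, trace_smul, trace_one, Fintype.card_fin] at h1
    have : (trace (S T)) - lam * d ≥ 0 := by simpa using h1
    nlinarith
  -- det S T upper bound
  have hQpos : (0:ℝ) < (d * lam + T) / d := by positivity
  have hfT : Real.log (S T).det ≤ d * Real.log ((d * lam + T) / d) := by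
    have h1 : (S T).det ≤ ((S T).trace / d) ^ d := det_le_trace_div_pow hd (hSpd T).posSemidef
    have h2 : ((S T).trace / d) ^ d ≤ ((d * lam + T) / d) ^ d := by
      have h0 : (0:ℝ) ≤ (S T).trace := le_trans (by positivity) htrace_lb
      have h4 := htrace_ub T
      gcongr
    have h3 : Real.log (S T).det ≤ Real.log (((d * lam + T) / d) ^ d) :=
      Real.log_le_log (hSpd T).det_pos (h1.trans h2)
    rwa [Real.log_pow] at h3
  -- final
  have hrw : (1 : ℝ) + T / (d * lam) = ((d * lam + T) / d) / lam := by
    field_simp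
  rw [hrw, Real.log_div hQpos.ne' hlam0.ne']
  calc ∑ t ∈ Finset.range T, ((R t)⁻¹ * X t * (R t)⁻¹).trace
      ≤ 2 * (Real.log (S T).det - Real.log (S 0).det) := tele
    _ ≤ 2 * (d:ℝ) * (Real.log ((d * lam + T) / d) - Real.log lam) := by
        rw [hS0det]
        nlinarith [hfT]
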